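/- arXiv:2302.11425 — 6 statements merged into one kernel-verified Lean document; each statement's English description precedes it below -/
import Mathlib

section
/- If K is a field of characteristic not 2 and K is nonreal (i.e. -1 is a sum of squares in K), then s(K) ≤ p(K) ≤ s(K) + 1, where s(K) is the level and p(K) is the Pythagoras number. -/
/-- `a` is a sum of `n` squares in `R`. -/
def IsSumSqN {R : Type*} [CommRing R] (n : ℕ) (a : R) : Prop :=
  ∃ x : Fin n → R, a = ∑ i, x i ^ 2

/-- `a` is a sum of squares in `R`. -/
def IsSOS {R : Type*} [CommRing R] (a : R) : Prop := ∃ n, IsSumSqN n a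

/-- The level `s(R)`. -/
noncomputable def levelN (R : Type*) [CommRing R] : ℕ∞ :=
  sInf {n : ℕ∞ | ∃ m : ℕ, (m : ℕ∞) = n ∧ IsSumSqN m (-1 : R)}

/-- The Pythagoras number `p(R)`. -/
noncomputable def pythNum (R : Type*) [CommRing R] : ℕ∞ :=
  sInf {n : ℕ∞ | ∃ m : ℕ, (m : ℕ∞) = n ∧ ∀ a : R, IsSOS a → IsSumSqN m a}

open Classical in
/-- The modified Pythagoras number `p'(R)`. -/
noncomputable def pythNum' (R : Type*) [CommRing R] : ℕ∞ :=
  if ¬ IsSOS (-1 : R) ∨ ringChar R = 2 then pythNum R else levelN R + 1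

open Classical in
/-- If `K` is a nonreal field of characteristic not 2, then `s(K) ≤ p(K) ≤ s(K) + 1`. -/
theorem level_le_pythagoras_le_level_add_one (K : Type*) [Field K]
    (h2 : ringChar K ≠ 2) (hnonreal : IsSOS (-1 : K)) :
    levelN K ≤ pythNum K ∧ pythNum K ≤ levelN K + 1 := by
  constructor
  · apply sInf_le_sInf
    rintro n ⟨m, rfl, hm⟩
    exact ⟨m, rfl, hm (-1) hnonreal⟩
  · obtain ⟨n0, hn0⟩ := hnonreal
    have hex : ∃ n, IsSumSqN n (-1 : K) := ⟨n0, hn0⟩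
    set s := Nat.find hex with hs
    have hmem : IsSumSqN s (-1 : K) := Nat.find_spec hex
    have hlev : levelN K = (s : ℕ∞) := by
      apply le_antisymm
      · exact sInf_le ⟨s, rfl, hmem⟩
      · apply le_sInf
        rintro n ⟨m, rfl, hm⟩
        simpa [hs] using Nat.find_min' hex hm
    rw [hlev]
    apply sInf_le
    refine ⟨s + 1, by push_cast; rfl, ?_⟩
    intro a _
    obtain ⟨x, hx⟩ := hmem
    have h2' : (2 : K) ≠ 0 := Ring.two_ne_zero h2
    refine ⟨Fin.cons ((a + 1) / 2) (fun i => x i * ((a - 1) / 2)), ?_⟩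
    simp only [Fin.sum_univ_succ, Fin.cons_zero, Fin.cons_succ]
    have hsum : ∑ i, (x i * ((a - 1) / 2)) ^ 2 = (-1) * ((a - 1) / 2) ^ 2 := by
      have : ∑ i, (x i * ((a - 1) / 2)) ^ 2 = (∑ i, x i ^ 2) * ((a - 1) / 2) ^ 2 := by
        rw [Finset.sum_mul]
        exact Finset.sum_congr rfl fun i _ => by ring
      rw [this, ← hx]
    rw [hsum]
    field_simp
    ring
end

section
/- Let v be a valuation on a field K. Then s(K) ≥ s(Kv) and p(K) ≥ p(Kv), where Kv is the residue field. -/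
/-!
Write a sum of squares `b = ∑ xᵢ²` of an element `b` of the valuation ring `A` and divide by the
`xⱼ` of largest value. If `xⱼ ∈ A` then all `xᵢ ∈ A` and the residue of `b` is the sum of the
residues of the `xᵢ²`. Otherwise `b / xⱼ²` lies in the maximal ideal while every `xᵢ / xⱼ ∈ A`, so
reducing gives `0 = 1 + ∑_{i ≠ j} (xᵢ / xⱼ)²` in the residue field, i.e. `-1` is a sum of fewer
squares there. Since `-1` being a sum of `k` squares in a field makes every sum of squares a sum of
`k + 1` squares, both alternatives bound the level and the Pythagoras number of the residue field.
-/

open IsLocalRing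

section CommRing

variable {R S : Type*} [CommRing R] [CommRing S]

theorem IsSumSqN.map (f : R →+* S) {n : ℕ} {a : R} (h : IsSumSqN n a) : IsSumSqN n (f a) := by
  obtain ⟨x, rfl⟩ := h
  exact ⟨f ∘ x, by simp⟩

theorem IsSumSqN.exists_preimage {f : R →+* S} (hf : Function.Surjective f) {n : ℕ} {a : S}
    (h : IsSumSqN n a) : ∃ b : R, IsSumSqN n b ∧ f b = a := by
  obtain ⟨x, rfl⟩ := h
  choose y hy using fun i => hf (x i)
  exact ⟨∑ i, y i ^ 2, ⟨y, rfl⟩, by simp [hy]⟩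

theorem IsSumSqN.mono {n m : ℕ} (hnm : n ≤ m) {a : R} (h : IsSumSqN n a) : IsSumSqN m a := by
  induction m, hnm using Nat.le_induction with
  | base => exact h
  | succ m _ ih =>
    obtain ⟨x, hx⟩ := ih
    exact ⟨Fin.cons 0 x, by simp [Fin.sum_univ_succ, hx]⟩

theorem isSumSqN_one_of_isSOS [CharP R 2] {a : R} (ha : IsSOS a) : IsSumSqN 1 a := by
  obtain ⟨n, x, rfl⟩ := ha
  exact ⟨fun _ => ∑ i, x i, by simp [CharTwo.sum_sq]⟩

/-- `a = ((a + 1) / 2)² + (-1) * ((a - 1) / 2)²`. -/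
theorem IsSumSqN.succ_of_isUnit_two {k : ℕ} (h : IsSumSqN k (-1 : R)) (h2 : IsUnit (2 : R))
    (a : R) : IsSumSqN (k + 1) a := by
  obtain ⟨y, hy⟩ := h
  set u : R := ↑h2.unit⁻¹
  have hu : u * 2 = 1 := h2.val_inv_mul
  refine ⟨Fin.cons (u * (a + 1)) fun i => y i * (u * (a - 1)), ?_⟩
  simp only [Fin.sum_univ_succ, Fin.cons_zero, Fin.cons_succ, mul_pow, ← Finset.sum_mul, ← hy]
  linear_combination (-(a * (u * 2 + 1))) * hu

theorem neg_one_isSumSqN_of_sum_sq_eq_zero {n : ℕ} {y : Fin (n + 1) → R} {j : Fin (n + 1)}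
    (hj : y j = 1) (h : ∑ i, y i ^ 2 = 0) : IsSumSqN n (-1 : R) := by
  refine ⟨fun i => y (j.succAbove i), ?_⟩
  rw [Fin.sum_univ_succAbove _ j, hj] at h
  linear_combination -h

theorem levelN_le_levelN (h : ∀ m, IsSumSqN m (-1 : R) → IsSumSqN m (-1 : S)) :
    levelN S ≤ levelN R :=
  sInf_le_sInf fun _ ⟨m, hm, hR⟩ => ⟨m, hm, h m hR⟩

theorem pythNum_le_pythNum
    (h : ∀ m, (∀ a : R, IsSOS a → IsSumSqN m a) → ∀ a : S, IsSOS a → IsSumSqN m a) :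
    pythNum S ≤ pythNum R :=
  sInf_le_sInf fun _ ⟨m, hm, hR⟩ => ⟨m, hm, h m hR⟩

end CommRing

theorem IsSumSqN.succ_of_isSOS {F : Type*} [Field F] {k : ℕ} (h : IsSumSqN k (-1 : F)) {a : F}
    (ha : IsSOS a) : IsSumSqN (k + 1) a := by
  by_cases h2 : (2 : F) = 0
  · have := CharTwo.of_one_ne_zero_of_two_eq_zero one_ne_zero h2
    exact (isSumSqN_one_of_isSOS ha).mono (Nat.le_add_left 1 k)
  · exact h.succ_of_isUnit_two (Ne.isUnit h2) a

namespace ValuationSubring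

variable {K : Type*} [Field K] (A : ValuationSubring K)

theorem isSumSqN_residue_or_neg_one {m : ℕ} {b : A} (hb : IsSumSqN m (b : K)) :
    IsSumSqN m (residue A b) ∨ ∃ n < m, IsSumSqN n (-1 : ResidueField A) := by
  obtain ⟨x, hx⟩ := hb
  by_cases hall : ∀ i, x i ∈ A
  · have hb : b = ∑ i, (⟨x i, hall i⟩ : A) ^ 2 := Subtype.ext (by simpa using hx)
    exact .inl (hb ▸ IsSumSqN.map (residue A) ⟨_, rfl⟩)
  obtain ⟨i₀, hi₀⟩ := not_forall.1 hall
  obtain _ | n := m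
  · exact i₀.elim0
  refine .inr ⟨n, n.lt_succ_self, ?_⟩
  obtain ⟨j, -, hj⟩ := Finset.exists_max_image Finset.univ (fun i => A.valuation (x i))
    ⟨i₀, Finset.mem_univ _⟩
  have hj_gt : 1 < A.valuation (x j) :=
    (not_le.1 ((A.valuation_le_one_iff _).not.2 hi₀)).trans_le (hj i₀ (Finset.mem_univ _))
  have hj_pos : 0 < A.valuation (x j) := zero_lt_one.trans hj_gt
  have hxj : x j ≠ 0 := fun h => by simp [h] at hj_pos
  let y (i : Fin (n + 1)) : A := ⟨x i / x j, (A.valuation_le_one_iff _).1 <| by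
    rw [map_div₀, div_le_one₀ hj_pos]
    exact hj i (Finset.mem_univ _)⟩
  have hc_lt : A.valuation (b / x j ^ 2) < 1 := by
    rw [map_div₀, map_pow, div_lt_one₀ (pow_pos hj_pos 2)]
    exact (A.valuation_le_one b).trans_lt (one_lt_pow₀ hj_gt two_ne_zero)
  let c : A := ⟨b / x j ^ 2, (A.valuation_le_one_iff _).1 hc_lt.le⟩
  have hc : c = ∑ i, y i ^ 2 := Subtype.ext <| by simp [c, y, div_pow, ← Finset.sum_div, hx]
  have hc_res : residue A c = 0 := (residue_eq_zero_iff c).2 ((A.valuation_lt_one_iff c).2 hc_lt)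
  refine neg_one_isSumSqN_of_sum_sq_eq_zero (y := fun i => residue A (y i)) (j := j) ?_ ?_
  · simp [show y j = 1 from Subtype.ext (div_self hxj)]
  · simpa [hc] using hc_res

theorem levelN_residueField_le : levelN (ResidueField A) ≤ levelN K := by
  refine levelN_le_levelN fun m hm => ?_
  have hm' : IsSumSqN m ((-1 : A) : K) := by simpa using hm
  rcases A.isSumSqN_residue_or_neg_one hm' with h | ⟨n, hnm, h⟩
  · simpa using h
  · exact h.mono hnm.le

theorem pythNum_residueField_le : pythNum (ResidueField A) ≤ pythNum K := by
  refine pythNum_le_pythNum fun m hK a ⟨n, ha⟩ => ?_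
  obtain ⟨b, hb, rfl⟩ := ha.exists_preimage (residue_surjective (R := A))
  rcases A.isSumSqN_residue_or_neg_one (hK b ⟨n, hb.map A.subtype⟩) with h | ⟨k, hkm, h⟩
  · exact h
  · exact (h.succ_of_isSOS ⟨n, hb.map (residue A)⟩).mono hkm

end ValuationSubring

/-- For a valuation `v` on `K`: `s(K) ≥ s(Kv)` and `p(K) ≥ p(Kv)`. -/
theorem level_pyth_residue_le {K : Type*} [Field K] {Γ₀ : Type*}
    [LinearOrderedCommGroupWithZero Γ₀] (v : Valuation K Γ₀) :
    levelN (IsLocalRing.ResidueField v.valuationSubring) ≤ levelN K ∧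
      pythNum (IsLocalRing.ResidueField v.valuationSubring) ≤ pythNum K :=
  ⟨v.valuationSubring.levelN_residueField_le, v.valuationSubring.pythNum_residueField_le⟩
end

section
/- Let K be a field of characteristic not 2 and n a natural number such that the (n+1)-st power I^{n+1}K of the fundamental ideal of the Witt ring of K is torsion-free. Then p(K) ≤ 2^n. -/
/-- The hyperbolic diagonal form `m × ⟨1,-1⟩` over `K`. -/
noncomputable def hypForm (K : Type*) [Field K] (m : ℕ) :
    QuadraticForm K (Fin m ⊕ Fin m → K) :=
  QuadraticMap.weightedSumSquares K (Sum.elim (fun _ => (1 : K)) (fun _ => (-1 : K)))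

/-- A quadratic form is hyperbolic if it is isometric to some `m × ⟨1,-1⟩`. -/
def IsHypForm {K : Type*} [Field K] {ι : Type*} [Fintype ι]
    (q : QuadraticForm K (ι → K)) : Prop :=
  ∃ m, QuadraticMap.Equivalent q (hypForm K m)

/-!
Let `a ≠ 0` be a sum of `k` squares and `φ = ⟨⟨-a, 1, …, 1⟩⟩ ≅ 2ⁿ⟨1, -a⟩`. Sums of `2^m` squares
form a round form (Pfister), so `a` is a similarity factor of `2^(k+n)⟨1⟩` and
`2^k φ ≅ 2^(k+n)⟨1, -a⟩` is hyperbolic. Torsion-freeness makes `φ` hyperbolic, hence isotropic: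
`x ⬝ᵥ x = a (y ⬝ᵥ y)` for some `x, y ∈ K^(2ⁿ)`, not both zero. Roundness of `2ⁿ⟨1⟩` then writes
`a` as a sum of `2ⁿ` squares, unless `2ⁿ⟨1⟩` is isotropic, in which case it is universal.
-/

section

variable {K M : Type*} [Field K] [AddCommGroup M] [Module K M]

def mixEquiv (p q : K) (h : p ≠ q) : (M × M) ≃ₗ[K] (M × M) where
  toFun x := (x.1 + p • x.2, x.1 + q • x.2)
  invFun x := (x.1 - (p / (p - q)) • (x.1 - x.2), (p - q)⁻¹ • (x.1 - x.2))
  map_add' x y := by ext <;> simp <;> module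
  map_smul' c x := by ext <;> simp [smul_add, smul_smul, mul_comm]
  left_inv x := by
    have : p - q ≠ 0 := sub_ne_zero.2 h
    ext <;> simp <;> match_scalars <;> field_simp
    ring
  right_inv x := by
    have : p - q ≠ 0 := sub_ne_zero.2 h
    ext <;> simp <;> match_scalars <;> field_simp <;> ring

end

namespace QuadraticMap

variable {K M M' : Type*} [Field K] [AddCommGroup M] [Module K M] [AddCommGroup M'] [Module K M']

def IsRound (Q : QuadraticForm K M) : Prop :=
  ∀ x, Q x ≠ 0 → (Q x • Q).Equivalent Q

theorem Equivalent.smul {Q : QuadraticForm K M} {Q' : QuadraticForm K M'} (h : Q.Equivalent Q')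
    (c : K) : (c • Q).Equivalent (c • Q') :=
  h.map fun f => { f.toLinearEquiv with map_app' := fun x => by simp [f.map_app] }

theorem Anisotropic.of_equivalent {Q : QuadraticForm K M} {Q' : QuadraticForm K M'}
    (hQ : Q.Anisotropic) (h : Q'.Equivalent Q) : Q'.Anisotropic := by
  obtain ⟨f⟩ := h
  exact fun x hx => f.toLinearEquiv.map_eq_zero_iff.1 (hQ _ ((f.map_app x).trans hx))

theorem IsRound.of_equivalent {Q : QuadraticForm K M} {Q' : QuadraticForm K M'} (hQ : Q.IsRound)
    (h : Q.Equivalent Q') : Q'.IsRound := by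
  obtain ⟨f⟩ := h
  intro x hx
  rw [← f.symm.map_app x] at hx ⊢
  exact ((Equivalent.smul ⟨f⟩ _).symm.trans (hQ _ hx)).trans ⟨f⟩

theorem isRound_sq : (sq : QuadraticForm K K).IsRound := fun x hx =>
  ⟨{ LinearEquiv.smulOfNeZero K K x (by simpa using hx) with
      map_app' := fun y => by simp; ring }⟩

theorem IsRound.exists_apply_eq_div {Q : QuadraticForm K M} (hQ : Q.IsRound) {x : M} (hx : Q x ≠ 0)
    (y : M) : ∃ z, Q z = Q x / Q y := by
  obtain ⟨g⟩ := hQ x hx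
  refine ⟨g ((Q y)⁻¹ • y), ?_⟩
  rw [g.map_app, smul_apply, QuadraticMap.map_smul, smul_eq_mul, smul_eq_mul]
  rcases eq_or_ne (Q y) 0 with hy | hy
  · simp [hy]
  · field_simp

theorem surjective_of_isotropic {Q : QuadraticForm K M} {t e : M} (ht : Q t = 0)
    (he : polar Q t e ≠ 0) : Function.Surjective Q := fun a =>
  ⟨((a - Q e) / polar Q t e) • t + e, by
    rw [QuadraticMap.map_add (⇑Q), QuadraticMap.map_smul, polar_smul_left, ht]
    simp only [smul_eq_mul, mul_zero, zero_add]
    field_simp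
    ring⟩

theorem smul_prod (c : K) (Q : QuadraticForm K M) (Q' : QuadraticForm K M') :
    c • Q.prod Q' = (c • Q).prod (c • Q') := by
  ext x
  simp [mul_add]

theorem Equivalent.smul_prod_self {Q : QuadraticForm K M} {s : K} (h : (s • Q).Equivalent Q) :
    (s • Q.prod Q).Equivalent (Q.prod Q) := by
  rw [smul_prod]
  exact h.prod h

theorem add_smul_prod_self_equivalent {Q : QuadraticForm K M} {b c : K} (hb : b ≠ 0) (hc : c ≠ 0)
    (hbc : b + c ≠ 0) (hQb : (b • Q).Equivalent Q) (hQc : (c • Q).Equivalent Q) :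
    ((b + c) • Q.prod Q).Equivalent (Q.prod Q) := by
  obtain ⟨gb⟩ := hQb
  obtain ⟨gc⟩ := hQc
  have hne : b⁻¹ ≠ -c⁻¹ := by
    contrapose! hbc
    field_simp at hbc
    linear_combination hbc
  refine ⟨{ ((LinearEquiv.refl K M).prodCongr (gc.toLinearEquiv.trans gb.toLinearEquiv)).trans
    ((mixEquiv b⁻¹ (-c⁻¹) hne).trans (gb.toLinearEquiv.prodCongr gc.toLinearEquiv)) with
      map_app' := ?_ }⟩
  rintro ⟨y, z⟩
  -- With `w = gb (gc z)`, the cross terms `polar Q y w` cancel and `(b⁻¹ + c⁻¹) Q w = (b + c) Q z`.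
  set w := gb (gc z)
  have hw : Q w = b * (c * Q z) := (gb.map_app _).trans (congrArg (b * ·) (gc.map_app z))
  show Q (gb (y + b⁻¹ • w)) + Q (gc (y + (-c⁻¹) • w)) = (b + c) * (Q y + Q z)
  rw [gb.map_app, gc.map_app]
  simp only [smul_apply, smul_eq_mul, QuadraticMap.map_add (⇑Q), QuadraticMap.map_smul,
    polar_smul_right, hw]
  field_simp
  ring

theorem IsRound.prod_self {Q : QuadraticForm K M} (hQ : Q.IsRound) : (Q.prod Q).IsRound := by
  rintro ⟨u, v⟩ huv
  rw [prod_apply] at huv ⊢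
  rcases eq_or_ne (Q u) 0 with hu | hu
  · rw [hu, zero_add] at huv ⊢
    exact (hQ v huv).smul_prod_self
  rcases eq_or_ne (Q v) 0 with hv | hv
  · rw [hv, add_zero] at huv ⊢
    exact (hQ u huv).smul_prod_self
  exact add_smul_prod_self_equivalent hu hv huv (hQ u hu) (hQ v hv)

end QuadraticMap

open QuadraticMap

section SumsOfSquares

variable {K : Type*} [Field K] {ι κ : Type*} [Fintype ι] [Fintype κ]

theorem weightedSumSquares_equivalent_of_equiv {w : ι → K} {w' : κ → K} (σ : ι ≃ κ)
    (h : ∀ i, w' (σ i) = w i) :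
    (weightedSumSquares K w).Equivalent (weightedSumSquares K w') :=
  ⟨{ LinearEquiv.funCongrLeft K K σ.symm with
      map_app' := fun v => by
        simp only [weightedSumSquares_apply]
        rw [← Equiv.sum_comp σ]
        simp [h] }⟩

theorem weightedSumSquares_sumElim_equivalent (w₁ : ι → K) (w₂ : κ → K) :
    (weightedSumSquares K (Sum.elim w₁ w₂)).Equivalent
      ((weightedSumSquares K w₁).prod (weightedSumSquares K w₂)) :=
  ⟨{ LinearEquiv.sumArrowLequivProdArrow ι κ K K with
      map_app' := fun v => by simp [weightedSumSquares_apply, Fintype.sum_sum_type] }⟩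

theorem weightedSumSquares_const (c : K) :
    weightedSumSquares K (fun _ : ι => c) = c • weightedSumSquares K (1 : ι → K) := by
  ext v
  simp [weightedSumSquares_apply, Finset.mul_sum]

theorem weightedSumSquares_sumElim_const_equivalent (c : K) :
    (weightedSumSquares K (Sum.elim (fun _ : κ => (1 : K)) fun _ : κ => c)).Equivalent
      ((weightedSumSquares K (1 : κ → K)).prod (c • weightedSumSquares K (1 : κ → K))) := by
  rw [← weightedSumSquares_const]
  exact weightedSumSquares_sumElim_equivalent _ _

theorem weightedSumSquares_one_apply (v : ι → K) :
    weightedSumSquares K (1 : ι → K) v = v ⬝ᵥ v := by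
  simp [weightedSumSquares_apply, dotProduct]

theorem isRound_weightedSumSquares_one_fin_two_pow (m : ℕ) :
    (weightedSumSquares K (1 : Fin (2 ^ m) → K)).IsRound := by
  induction m with
  | zero =>
    obtain ⟨_⟩ := Fintype.card_eq_one_iff_nonempty_unique.1 (Fintype.card_fin (2 ^ 0))
    exact isRound_sq.of_equivalent ⟨{ (LinearEquiv.funUnique _ K K).symm with
      map_app' := fun x => by simp [weightedSumSquares_apply] }⟩
  | succ m ih =>
    refine ih.prod_self.of_equivalent ((weightedSumSquares_sumElim_equivalent 1 1).symm.trans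
      (weightedSumSquares_equivalent_of_equiv (finSumFinEquiv.trans (finCongr (by ring))) ?_))
    rintro (_ | _) <;> rfl

theorem isRound_weightedSumSquares_one {m : ℕ} (h : Fintype.card ι = 2 ^ m) :
    (weightedSumSquares K (1 : ι → K)).IsRound :=
  (isRound_weightedSumSquares_one_fin_two_pow m).of_equivalent
    (weightedSumSquares_equivalent_of_equiv (Fintype.equivFinOfCardEq h).symm fun _ => rfl)

theorem weightedSumSquares_one_surjective_of_isotropic (h2 : (2 : K) ≠ 0) {t : ι → K}
    (ht0 : t ≠ 0) (ht : weightedSumSquares K (1 : ι → K) t = 0) :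
    Function.Surjective (weightedSumSquares K (1 : ι → K)) := by
  classical
  obtain ⟨j, hj⟩ : ∃ j, t j ≠ 0 := Function.ne_iff.1 ht0
  refine surjective_of_isotropic ht (e := Pi.single j 1) ?_
  have : polar (weightedSumSquares K (1 : ι → K)) t (Pi.single j 1) = 2 * t j := by
    simp only [polar, weightedSumSquares_one_apply, add_dotProduct, dotProduct_add,
      dotProduct_single_one, single_dotProduct, Pi.add_apply, Pi.single_eq_same]
    ring
  rw [this]
  exact mul_ne_zero h2 hj

theorem isSumSqN_card_iff {a : K} :
    IsSumSqN (Fintype.card ι) a ↔ a ∈ Set.range (weightedSumSquares K (1 : ι → K)) := by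
  let e := Fintype.equivFin ι
  simp only [IsSumSqN, Set.mem_range, weightedSumSquares_apply, Pi.one_apply, one_smul, ← pow_two]
  constructor
  · rintro ⟨x, rfl⟩
    exact ⟨x ∘ e, Equiv.sum_comp e (x · ^ 2)⟩
  · rintro ⟨y, rfl⟩
    exact ⟨y ∘ e.symm, (Equiv.sum_comp e.symm (y · ^ 2)).symm⟩

end SumsOfSquares

section Hyperbolic

variable {K : Type*} [Field K] {ι κ : Type*} [Fintype ι] [Fintype κ]

theorem IsHypForm.of_equivalent {Q : QuadraticForm K (ι → K)} {Q' : QuadraticForm K (κ → K)}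
    (h : IsHypForm Q) (e : Q'.Equivalent Q) : IsHypForm Q' :=
  let ⟨m, hm⟩ := h
  ⟨m, e.trans hm⟩

theorem hypForm_apply_one (m : ℕ) : hypForm K m 1 = 0 := by
  simp [hypForm, weightedSumSquares_apply, Fintype.sum_sum_type]

theorem IsHypForm.not_anisotropic [Nonempty ι] {Q : QuadraticForm K (ι → K)} (h : IsHypForm Q) :
    ¬ Q.Anisotropic := by
  obtain ⟨m, ⟨f⟩⟩ := h
  intro hQ
  have h1 : (1 : Fin m ⊕ Fin m → K) = 0 := by
    simpa using congrArg f (hQ _ ((f.symm.map_app 1).trans (hypForm_apply_one m)))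
  refine one_ne_zero (f.toLinearEquiv.injective ?_)
  rw [map_zero, ← mul_one (f.toLinearEquiv 1), h1, mul_zero]

theorem isHypForm_of_isRound {a : K} (hS : (weightedSumSquares K (1 : κ → K)).IsRound)
    (ha : a ∈ Set.range (weightedSumSquares K (1 : κ → K))) (ha0 : a ≠ 0) :
    IsHypForm (weightedSumSquares K (Sum.elim (fun _ : κ => (1 : K)) fun _ : κ => -a)) := by
  obtain ⟨x, rfl⟩ := ha
  set S := weightedSumSquares K (1 : κ → K)
  have hneg : ((-S x) • S).Equivalent ((-1 : K) • S) := by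
    rw [← neg_one_mul, ← smul_smul]
    exact (hS x ha0).smul (-1)
  have hfin : S.Equivalent (weightedSumSquares K (1 : Fin (Fintype.card κ) → K)) :=
    weightedSumSquares_equivalent_of_equiv (Fintype.equivFin κ) fun _ => rfl
  exact ⟨Fintype.card κ, (weightedSumSquares_sumElim_const_equivalent _).trans <|
    ((Equivalent.refl S).prod hneg).trans <| (hfin.prod (hfin.smul _)).trans
      (weightedSumSquares_sumElim_const_equivalent _).symm⟩

theorem mem_range_of_isHypForm [Nonempty κ] (h2 : (2 : K) ≠ 0) {a : K}
    (hS : (weightedSumSquares K (1 : κ → K)).IsRound) (ha : a ≠ 0)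
    (h : IsHypForm (weightedSumSquares K (Sum.elim (fun _ : κ => (1 : K)) fun _ : κ => -a))) :
    a ∈ Set.range (weightedSumSquares K (1 : κ → K)) := by
  set S := weightedSumSquares K (1 : κ → K)
  obtain ⟨⟨x, y⟩, hxy0, hxy⟩ := (not_anisotropic_iff_exists _).1 fun hA =>
    h.not_anisotropic (hA.of_equivalent (weightedSumSquares_sumElim_const_equivalent _))
  replace hxy : S x = a * S y := by
    simp only [prod_apply, smul_apply, smul_eq_mul] at hxy
    linear_combination hxy
  rcases eq_or_ne (S y) 0 with hy | hy
  · rw [hy, mul_zero] at hxy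
    by_cases hx0 : x = 0
    · have hy0 : y ≠ 0 := fun hy0 => hxy0 (by simp [hx0, hy0])
      exact weightedSumSquares_one_surjective_of_isotropic h2 hy0 hy a
    · exact weightedSumSquares_one_surjective_of_isotropic h2 hx0 hxy a
  · obtain ⟨z, hz⟩ := hS.exists_apply_eq_div (x := x) (by rw [hxy]; exact mul_ne_zero ha hy) y
    exact ⟨z, by rw [hz, hxy, mul_div_cancel_right₀ _ hy]⟩

end Hyperbolic

section Pfister

variable {K : Type*} [Field K] {ι : Type*} [DecidableEq ι]

def finsetSplit (j : ι) : Finset ι ≃ {T : Finset ι // j ∉ T} ⊕ {T : Finset ι // j ∉ T} :=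
  (Equiv.sumCompl fun T : Finset ι => j ∉ T).symm.trans <| Equiv.sumCongr (Equiv.refl _)
    { toFun := fun T => ⟨T.1.erase j, Finset.notMem_erase j T.1⟩
      invFun := fun T => ⟨insert j T.1, not_not.2 (Finset.mem_insert_self j T.1)⟩
      left_inv := fun T => Subtype.ext (Finset.insert_erase (not_not.1 T.2))
      right_inv := fun T => Subtype.ext (Finset.erase_insert T.2) }

theorem sumElim_finsetSplit {α : Type*} (j : ι) (b c : α) (T : Finset ι) :
    Sum.elim (fun _ => b) (fun _ => c) (finsetSplit j T) = if j ∈ T then c else b := by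
  by_cases h : j ∈ T
  · simp [finsetSplit, Equiv.sumCompl_symm_apply_of_neg (p := fun T => j ∉ T) (not_not.2 h), h]
  · simp [finsetSplit, Equiv.sumCompl_symm_apply_of_pos (p := fun T => j ∉ T) h, h]

theorem card_subtype_finset_notMem [Fintype ι] (j : ι) :
    Fintype.card {T : Finset ι // j ∉ T} = 2 ^ (Fintype.card ι - 1) := by
  obtain ⟨m, hm⟩ := Nat.exists_eq_add_one_of_ne_zero (Fintype.card_pos_iff.2 ⟨j⟩).ne'
  have h := Fintype.card_congr (finsetSplit j)
  rw [Fintype.card_sum, Fintype.card_finset, hm, pow_succ] at h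
  rw [hm, Nat.add_sub_cancel]
  omega

theorem prod_coe_pi_mulSingle (j : ι) (u : Kˣ) (T : Finset ι) :
    ∏ i ∈ T, ((Pi.mulSingle j u : ι → Kˣ) i : K) = if j ∈ T then (u : K) else 1 := by
  rw [← Units.coe_prod, Finset.prod_pi_mulSingle']
  split_ifs <;> simp

variable [Fintype ι]

theorem pfister_mulSingle_equivalent (j : ι) (u : Kˣ) :
    (weightedSumSquares K
      fun T : Finset ι => ∏ i ∈ T, ((Pi.mulSingle j u : ι → Kˣ) i : K)).Equivalent
      (weightedSumSquares K (Sum.elim (fun _ : {T : Finset ι // j ∉ T} => (1 : K))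
        fun _ : {T : Finset ι // j ∉ T} => (u : K))) :=
  weightedSumSquares_equivalent_of_equiv (finsetSplit j) fun T => by
    rw [sumElim_finsetSplit, prod_coe_pi_mulSingle]

theorem prod_pfister_mulSingle_equivalent (X : Type*) [Fintype X] (j : ι) (u : Kˣ) :
    (weightedSumSquares K
      fun p : X × Finset ι => ∏ i ∈ p.2, ((Pi.mulSingle j u : ι → Kˣ) i : K)).Equivalent
      (weightedSumSquares K (Sum.elim (fun _ : X × {T : Finset ι // j ∉ T} => (1 : K))
        fun _ : X × {T : Finset ι // j ∉ T} => (u : K))) := by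
  refine weightedSumSquares_equivalent_of_equiv
    ((Equiv.prodCongr (Equiv.refl X) (finsetSplit j)).trans (Equiv.prodSumDistrib _ _ _)) ?_
  rintro ⟨x, T⟩
  rw [prod_coe_pi_mulSingle, ← sumElim_finsetSplit j (1 : K)]
  change Sum.elim _ _ (Equiv.prodSumDistrib X _ _ (x, finsetSplit j T)) = _
  cases finsetSplit j T <;> rfl

end Pfister

theorem IsSumSqN.mono_s5 {R : Type*} [CommRing R] {k N : ℕ} {a : R} (h : IsSumSqN k a)
    (hkN : k ≤ N) : IsSumSqN N a := by
  induction N, hkN using Nat.le_induction with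
  | base => exact h
  | succ N _ ih =>
    obtain ⟨x, hx⟩ := ih
    exact ⟨Fin.snoc x 0, by simpa [Fin.sum_univ_castSucc] using hx⟩

theorem pythNum_le {R : Type*} [CommRing R] {N : ℕ} (h : ∀ a : R, IsSOS a → IsSumSqN N a) :
    pythNum R ≤ N :=
  sInf_le ⟨N, rfl, h⟩

/-- If every torsion `(n+1)`-fold Pfister form over `K` is hyperbolic (which for a field of
characteristic not `2` is equivalent to the torsion-freeness of `I^{n+1}K`),
then `p(K) ≤ 2^n`. -/
theorem pyth_le_two_pow_of_torsionFree (K : Type*) [Field K] (h2 : ringChar K ≠ 2) (n : ℕ)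
    (htf : ∀ (a : Fin (n + 1) → Kˣ) (m : ℕ),
      IsHypForm (QuadraticMap.weightedSumSquares K
        (fun p : Fin (2 ^ m) × Finset (Fin (n + 1)) => ∏ i ∈ p.2, (a i : K))) →
      IsHypForm (QuadraticMap.weightedSumSquares K
        (fun S : Finset (Fin (n + 1)) => ∏ i ∈ S, (a i : K)))) :
    pythNum K ≤ 2 ^ n := by
  classical
  refine (pythNum_le fun a ⟨k, hk⟩ => ?_).trans_eq (by norm_cast)
  rcases eq_or_ne a 0 with rfl | ha
  · exact ⟨0, by simp⟩
  let u : Kˣ := Units.mk0 (-a) (neg_ne_zero.2 ha)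
  have hκ : Fintype.card {T : Finset (Fin (n + 1)) // 0 ∉ T} = 2 ^ n := by
    rw [card_subtype_finset_notMem, Fintype.card_fin, Nat.add_sub_cancel]
  have hcard : Fintype.card (Fin (2 ^ k) × {T : Finset (Fin (n + 1)) // 0 ∉ T}) = 2 ^ (k + n) := by
    rw [Fintype.card_prod, Fintype.card_fin, hκ, pow_add]
  have hsum : IsSumSqN (2 ^ (k + n)) a :=
    hk.mono_s5 (Nat.lt_two_pow_self.le.trans (Nat.pow_le_pow_right two_pos (k.le_add_right n)))
  rw [← hcard, isSumSqN_card_iff] at hsum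
  have hbig := (isHypForm_of_isRound (isRound_weightedSumSquares_one hcard) hsum ha).of_equivalent
    (prod_pfister_mulSingle_equivalent _ (0 : Fin (n + 1)) u)
  have hsmall := (htf _ k hbig).of_equivalent (pfister_mulSingle_equivalent 0 u).symm
  have : Nonempty {T : Finset (Fin (n + 1)) // 0 ∉ T} := ⟨⟨∅, Finset.notMem_empty 0⟩⟩
  rw [← hκ, isSumSqN_card_iff]
  exact mem_range_of_isHypForm (Ring.two_ne_zero h2) (isRound_weightedSumSquares_one hκ) ha hsmall
end

section
/- Let K be a field with level s(K) > 1 (in particular -1 is not a square in K). Then the field F = K(X)(√(−(1+X²))) satisfies s(F) = 2, and hence p'(F) = 3, where p'(F) = s(F) + 1 for nonreal F of characteristic ≠ 2. -/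
/-!
Write `L = K(X)` and `F = L(√a)` with `a = -(1 + X²)`. In `F`, `-1 = X² + (√a)²`, so
`s(F) ≤ 2`. If `z = u + v√a` had `z² = -1`, comparing coordinates in the basis `1, √a` gives
`2uv = 0`, so either `-1 = u²` or `1 + X² = (v⁻¹)²` in `L`. Since `K[X]` is integrally closed,
both would descend to `K[X]`: the first contradicts `s(K) > 1` at the constant term, and
`1 + X²` is not a square since `(q - X)(q + X) = 1` would force `2X` to be constant.
Hence `s(F) = 2`, and `p'(F) = s(F) + 1 = 3`.
-/

open Polynomial

section Level

variable {R : Type*} [CommRing R]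

theorem levelN_le_of_isSumSqN {m : ℕ} (h : IsSumSqN m (-1 : R)) : levelN R ≤ m :=
  sInf_le ⟨m, rfl, h⟩

theorem not_isSquare_neg_one_of_one_lt_levelN (hs : 1 < levelN R) : ¬IsSquare (-1 : R) := by
  rintro ⟨r, hr⟩
  refine (levelN_le_of_isSumSqN (m := 1) ⟨fun _ => r, ?_⟩).not_gt hs
  rw [Fin.sum_univ_one, hr, sq]

theorem two_ne_zero_of_not_isSquare_neg_one (h : ¬IsSquare (-1 : R)) : (2 : R) ≠ 0 := by
  intro h2
  exact h ⟨1, by linear_combination -h2⟩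

theorem levelN_eq_two (h2 : IsSumSqN 2 (-1 : R)) (h1 : ¬IsSquare (-1 : R)) : levelN R = 2 := by
  refine le_antisymm (levelN_le_of_isSumSqN h2) (le_sInf ?_)
  rintro _ ⟨m, rfl, x, hx⟩
  by_contra! hm
  replace hm : m < 2 := by exact_mod_cast hm
  interval_cases m
  · exact h1 ⟨0, by simpa using hx⟩
  · exact h1 ⟨x 0, by rw [hx, Fin.sum_univ_one, sq]⟩

theorem levelN_eq_two_and_pythNum'_eq_three (h2 : IsSumSqN 2 (-1 : R))
    (h1 : ¬IsSquare (-1 : R)) : levelN R = 2 ∧ pythNum' R = 3 := by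
  have hchar : ringChar R ≠ 2 := fun hchar =>
    two_ne_zero_of_not_isSquare_neg_one h1 (by exact_mod_cast hchar ▸ ringChar.Nat.cast_ringChar)
  refine ⟨levelN_eq_two h2 h1, ?_⟩
  rw [pythNum', if_neg (not_or.mpr ⟨not_not.mpr ⟨2, h2⟩, hchar⟩), levelN_eq_two h2 h1]
  rfl

end Level

theorem IsIntegrallyClosed.isSquare_of_isSquare_algebraMap {R L : Type*} [CommRing R]
    [IsDomain R] [IsIntegrallyClosed R] [Field L] [Algebra R L] [IsFractionRing R L] {p : R}
    (h : IsSquare (algebraMap R L p)) : IsSquare p := by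
  obtain ⟨y, hy⟩ := h
  obtain ⟨q, rfl⟩ := IsIntegrallyClosed.exists_algebraMap_eq_of_isIntegral_pow (R := R) (K := L)
    two_pos (by rw [sq, ← hy]; exact isIntegral_algebraMap)
  exact ⟨q, IsFractionRing.injective R L (by rw [map_mul, hy])⟩

theorem Polynomial.not_isSquare_neg_one {R : Type*} [CommRing R] (h : ¬IsSquare (-1 : R)) :
    ¬IsSquare (-1 : R[X]) := fun hX => h (by simpa using hX.map (constantCoeff (R := R)))

theorem Polynomial.not_isSquare_one_add_X_sq {R : Type*} [CommRing R] [IsDomain R]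
    (h2 : (2 : R) ≠ 0) : ¬IsSquare (1 + X ^ 2 : R[X]) := by
  rintro ⟨q, hq⟩
  have hunit : IsUnit ((q - X) * (q + X)) := by
    rw [show (q - X) * (q + X) = 1 by linear_combination -hq]; exact isUnit_one
  have hdeg := natDegree_sub_le (q + X) (q - X)
  rw [natDegree_eq_zero_of_isUnit (isUnit_of_mul_isUnit_left hunit),
    natDegree_eq_zero_of_isUnit (isUnit_of_mul_isUnit_right hunit),
    show q + X - (q - X) = C 2 * X by rw [C_ofNat]; ring, natDegree_C_mul_X 2 h2] at hdeg
  omega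

namespace AdjoinRoot

variable {R : Type*} [CommRing R]

theorem exists_eq_of_mul_root_add_of {f : R[X]} (hf : f.Monic) (hdeg : f.natDegree = 2)
    (z : AdjoinRoot f) : ∃ u v : R, z = of f u * root f + of f v := by
  obtain ⟨g, rfl⟩ := mk_surjective z
  have hr : (g %ₘ f).natDegree ≤ 1 := by
    have := natDegree_modByMonic_lt g hf (by rintro rfl; simp at hdeg)
    omega
  refine ⟨(g %ₘ f).coeff 1, (g %ₘ f).coeff 0, ?_⟩
  rw [← mk_leftInverse hf (mk f g), modByMonicHom_mk, eq_X_add_C_of_natDegree_le_one hr]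
  simp

theorem eq_zero_of_of_mul_root_add_of_eq_zero {f : R[X]} (hf : f.Monic) (hdeg : f.natDegree = 2)
    {u v : R} (h : of f u * root f + of f v = 0) : u = 0 ∧ v = 0 := by
  have hmk : mk f (C u * X + C v) = 0 := by simpa only [map_add, map_mul, mk_C, mk_X] using h
  by_contra huv
  refine mk_ne_zero_of_natDegree_lt hf ?_ ?_ hmk
  · intro h0
    exact huv ⟨by simpa using congrArg (coeff · 1) h0, by simpa using congrArg (coeff · 0) h0⟩
  · have := natDegree_linear_le (a := u) (b := v)
    omega

theorem root_X_sq_sub_C_sq (a : R) : root (X ^ 2 - C a) ^ 2 = of _ a := by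
  rw [← sub_eq_zero, ← eval₂_root, eval₂_sub, eval₂_C, eval₂_pow, eval₂_X]

theorem isSquare_or_isSquare_mul_of_sq_eq_of [IsDomain R] (h2 : (2 : R) ≠ 0) {a c : R}
    {z : AdjoinRoot (X ^ 2 - C a)} (hz : z ^ 2 = of _ c) : IsSquare c ∨ IsSquare (c * a) := by
  have hf := monic_X_pow_sub_C a two_ne_zero
  obtain ⟨u, v, rfl⟩ := exists_eq_of_mul_root_add_of hf natDegree_X_pow_sub_C z
  have hsq : (of _ u * root (X ^ 2 - C a) + of _ v) ^ 2 - of _ c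
      = of _ (2 * u * v) * root _ + of _ (u ^ 2 * a + v ^ 2 - c) := by
    simp only [map_add, map_sub, map_mul, map_pow, map_ofNat]
    linear_combination of _ u ^ 2 * root_X_sq_sub_C_sq a
  rw [hz, sub_self, eq_comm] at hsq
  obtain ⟨huv, hc⟩ := eq_zero_of_of_mul_root_add_of_eq_zero hf natDegree_X_pow_sub_C hsq
  rcases mul_eq_zero.mp huv with hu | rfl
  · obtain rfl : u = 0 := (mul_eq_zero.mp hu).resolve_left h2
    exact .inl ⟨v, by linear_combination -hc⟩
  · exact .inr ⟨u * a, by linear_combination -a * hc⟩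

theorem not_isSquare_neg_one [IsDomain R] {a : R} (h1 : ¬IsSquare (-1 : R))
    (ha : ¬IsSquare (-a)) : ¬IsSquare (-1 : AdjoinRoot (X ^ 2 - C a)) := by
  rintro ⟨z, hz⟩
  have hz' : z ^ 2 = of (X ^ 2 - C a) (-1) := by rw [map_neg, map_one, hz, sq z]
  rcases isSquare_or_isSquare_mul_of_sq_eq_of (two_ne_zero_of_not_isSquare_neg_one h1) hz'
    with h | h
  · exact h1 h
  · exact ha (by rwa [neg_one_mul] at h)

theorem isSumSqN_two_neg_one (x : R) :
    IsSumSqN 2 (-1 : AdjoinRoot (X ^ 2 - C (-(1 + x ^ 2)))) := by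
  refine ⟨![of _ x, root _], ?_⟩
  simp [Fin.sum_univ_two, root_X_sq_sub_C_sq]

end AdjoinRoot

namespace RatFunc

variable {K : Type*} [Field K]

theorem not_isSquare_neg_one (h : ¬IsSquare (-1 : K)) : ¬IsSquare (-1 : RatFunc K) := fun hL =>
  Polynomial.not_isSquare_neg_one h
    (IsIntegrallyClosed.isSquare_of_isSquare_algebraMap (L := RatFunc K) (by simpa using hL))

theorem not_isSquare_one_add_X_sq (h2 : (2 : K) ≠ 0) : ¬IsSquare (1 + X ^ 2 : RatFunc K) :=
  fun hL =>
  Polynomial.not_isSquare_one_add_X_sq h2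
    (IsIntegrallyClosed.isSquare_of_isSquare_algebraMap (L := RatFunc K)
      (by simpa [algebraMap_X] using hL))

end RatFunc

/-- If `s(K) > 1`, then `F = K(X)(√(-(1+X²)))` has level 2 and `p'(F) = 3`. -/
theorem level_adjoin_sqrt_neg_one_add_sq (K : Type*) [Field K] (hs : 1 < levelN K) :
    levelN (AdjoinRoot
        (Polynomial.X ^ 2 + Polynomial.C (1 + RatFunc.X ^ 2) : Polynomial (RatFunc K))) = 2 ∧
      pythNum' (AdjoinRoot
        (Polynomial.X ^ 2 + Polynomial.C (1 + RatFunc.X ^ 2) : Polynomial (RatFunc K))) = 3 := by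
  have hK := not_isSquare_neg_one_of_one_lt_levelN hs
  rw [show (X ^ 2 + C (1 + RatFunc.X ^ 2) : (RatFunc K)[X]) = X ^ 2 - C (-(1 + RatFunc.X ^ 2)) by
    rw [map_neg, sub_neg_eq_add]]
  refine levelN_eq_two_and_pythNum'_eq_three (AdjoinRoot.isSumSqN_two_neg_one _) ?_
  refine AdjoinRoot.not_isSquare_neg_one (RatFunc.not_isSquare_neg_one hK) ?_
  rw [neg_neg]
  exact RatFunc.not_isSquare_one_add_X_sq (two_ne_zero_of_not_isSquare_neg_one hK)
end

section
/- Let F''/F' be a purely inseparable field extension with char(F') ≠ 2. Then every anisotropic quadratic form over F' remains anisotropic over F''. -/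
open scoped TensorProduct


private theorem odd_of_expChar_field (K : Type*) [Field K] [Invertible (2 : K)] (p : ℕ)
    (hp : ExpChar K p) : Odd p := by
  cases hp with
  | zero => exact odd_one
  | prime hq =>
    refine hq.odd_of_ne_two fun h2 => ?_
    subst h2
    have h0 : (2 : K) = 0 := by simpa using CharP.cast_eq_zero K 2
    exact Invertible.ne_zero (2 : K) h0

private theorem qf_sum_orthogonal {K : Type*} [Field K] [Invertible (2 : K)]
    {W : Type*} [AddCommGroup W] [Module K W] (Q : QuadraticForm K W)
    {n : ℕ} (x : Fin n → W)
    (hx : ∀ i j, i ≠ j → QuadraticMap.associated (R := K) Q (x i) (x j) = 0)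
    (g : Fin n → K) :
    Q (∑ i, g i • x i) = ∑ i, g i ^ 2 * Q (x i) := by
  have hB2 : ∀ i, QuadraticMap.associatedHom K Q (x i) (∑ j, g j • x j) = g i * Q (x i) := by
    intro i
    rw [map_sum, Finset.sum_eq_single i (fun j _ hj => by
        rw [map_smul, smul_eq_mul, hx i j (Ne.symm hj), mul_zero])
      (fun h => absurd (Finset.mem_univ i) h)]
    rw [map_smul, smul_eq_mul, QuadraticMap.associated_eq_self_apply]
  rw [← QuadraticMap.associated_eq_self_apply K Q, LinearMap.map_sum₂]
  refine Finset.sum_congr rfl fun i _ => ?_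
  rw [LinearMap.map_smul₂, smul_eq_mul, hB2]
  ring

private theorem aux_finite (F' F'' : Type*) [Field F'] [Field F'']
    [Algebra F' F''] [IsPurelyInseparable F' F''] [Invertible (2 : F')]
    (W : Type*) [AddCommGroup W] [Module F' W] [FiniteDimensional F' W]
    (Q : QuadraticForm F' W) (hQ : Q.Anisotropic) :
    (Q.baseChange F'').Anisotropic := by
  haveI : Invertible (2 : F'') :=
    (Invertible.map (algebraMap F' F'') 2).copy 2 (map_ofNat _ _).symm
  classical
  obtain ⟨e, he⟩ := LinearMap.BilinForm.exists_orthogonal_basis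
    (B := QuadraticMap.associated (R := F') Q) ⟨QuadraticMap.associated_isSymm F' Q⟩
  have ha : ∀ i, Q (e i) ≠ 0 := fun i h => e.ne_zero i (hQ _ h)
  have he' : ∀ i j, i ≠ j → QuadraticMap.associated (R := F') Q (e i) (e j) = 0 :=
    fun i j hij => he hij
  have hx'' : ∀ i j, i ≠ j → QuadraticMap.associated (R := F'') (Q.baseChange F'')
      ((1 : F'') ⊗ₜ[F'] e i) (1 ⊗ₜ[F'] e j) = 0 := by
    intro i j hij
    rw [QuadraticForm.associated_baseChange, LinearMap.BilinForm.baseChange_tmul, he' i j hij,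
      zero_smul]
  have hval : ∀ i, Q.baseChange F'' ((1 : F'') ⊗ₜ[F'] e i) = algebraMap F' F'' (Q (e i)) := by
    intro i
    rw [QuadraticForm.baseChange_tmul, mul_one, Algebra.smul_def, mul_one]
  intro v hv
  obtain ⟨c, hv'⟩ : ∃ c : Fin (Module.finrank F' W) → F'',
      v = ∑ i, c i • ((1 : F'') ⊗ₜ[F'] e i) := by
    refine ⟨fun i => (e.baseChange F'').repr v i, ?_⟩
    conv_lhs => rw [← (e.baseChange F'').sum_repr v]
    exact Finset.sum_congr rfl fun i _ => by rw [Module.Basis.baseChange_apply]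
  have h0 : ∑ i, c i ^ 2 * algebraMap F' F'' (Q (e i)) = 0 := by
    rw [← hv, hv', qf_sum_orthogonal _ _ hx'']
    exact Finset.sum_congr rfl fun i _ => by rw [hval]
  -- Frobenius descent
  set p := ringExpChar F' with hp
  haveI hE' : ExpChar F' p := ringExpChar.expChar F'
  haveI hE'' : ExpChar F'' p := expChar_of_injective_algebraMap (algebraMap F' F'').injective p
  choose n hn using fun i => IsPurelyInseparable.pow_mem F' p (c i)
  set N := Finset.univ.sup n with hN
  have hmem : ∀ i, c i ^ p ^ N ∈ (algebraMap F' F'').range := by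
    intro i
    have hsplit : p ^ N = p ^ n i * p ^ (N - n i) := by
      rw [← pow_add, Nat.add_sub_cancel' (Finset.le_sup (Finset.mem_univ i))]
    rw [hsplit, pow_mul]
    exact pow_mem (hn i) _
  choose d hd using hmem
  obtain ⟨k, hk⟩ := (odd_of_expChar_field F' p hE').pow (n := N)
  have hq0 : p ^ N ≠ 0 := (expChar_pow_pos F' p N).ne'
  have h1 : ∑ i, d i ^ 2 * Q (e i) ^ p ^ N = 0 := by
    have h2 : ∑ i, (c i ^ 2 * algebraMap F' F'' (Q (e i))) ^ p ^ N = 0 := by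
      rw [← sum_pow_char_pow, h0, zero_pow hq0]
    apply (algebraMap F' F'').injective
    rw [map_zero, ← h2, map_sum]
    refine Finset.sum_congr rfl fun i _ => ?_
    rw [map_mul, map_pow (algebraMap F' F'') (d i) 2, map_pow (algebraMap F' F'') _ (p ^ N),
      hd, mul_pow, pow_right_comm]
  have h4 : Q (∑ i, (d i * Q (e i) ^ k) • e i) = 0 := by
    rw [qf_sum_orthogonal _ _ he', ← h1]
    refine Finset.sum_congr rfl fun i _ => ?_
    rw [hk]
    ring
  have h6 : ∀ i, d i * Q (e i) ^ k = 0 :=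
    Fintype.linearIndependent_iff.mp e.linearIndependent _ (hQ _ h4)
  have h7 : ∀ i, c i = 0 := by
    intro i
    have hdi : d i = 0 := by
      rcases mul_eq_zero.mp (h6 i) with h | h
      · exact h
      · exact absurd h (pow_ne_zero _ (ha i))
    have hz : c i ^ p ^ N = 0 := by rw [← hd i, hdi, map_zero]
    exact pow_eq_zero_iff hq0 |>.mp hz
  rw [hv']
  exact Finset.sum_eq_zero fun i _ => by rw [h7 i, zero_smul]

/-- An anisotropic quadratic form over a field `F'` of characteristic not 2 (i.e. with 2
invertible) stays anisotropic under a purely inseparable field extension `F''/F'`. -/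
theorem anisotropic_baseChange_of_purelyInseparable (F' F'' : Type*) [Field F'] [Field F'']
    [Algebra F' F''] [IsPurelyInseparable F' F''] [Invertible (2 : F')]
    (V : Type*) [AddCommGroup V] [Module F' V]
    (Q : QuadraticForm F' V) (hQ : Q.Anisotropic) :
    (Q.baseChange F'').Anisotropic := by
  classical
  intro v hv
  obtain ⟨S, hS⟩ := TensorProduct.exists_finset v
  set W : Submodule F' V := Submodule.span F' ((S.image Prod.snd : Finset V) : Set V) with hW
  have hmem : ∀ p ∈ S, p.2 ∈ W :=
    fun p hp => Submodule.subset_span (Finset.mem_coe.mpr (Finset.mem_image_of_mem Prod.snd hp))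
  set w : F'' ⊗[F'] W := ∑ p ∈ S.attach, p.1.1 ⊗ₜ[F'] (⟨p.1.2, hmem p.1 p.2⟩ : W) with hw
  have hfw : (W.subtype.baseChange F'') w = v := by
    rw [hS, hw, map_sum, ← Finset.sum_attach S fun p => p.1 ⊗ₜ[F'] p.2]
    exact Finset.sum_congr rfl fun p _ => by rw [LinearMap.baseChange_tmul]; rfl
  have hQW : (Q.comp W.subtype).Anisotropic := by
    intro x hx
    rw [QuadraticMap.comp_apply] at hx
    exact Subtype.ext (hQ _ hx)
  have hcomp : QuadraticForm.baseChange F'' (Q.comp W.subtype) =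
      (Q.baseChange F'').comp (W.subtype.baseChange F'') := by
    ext m
    rw [QuadraticMap.comp_apply, LinearMap.baseChange_tmul, QuadraticForm.baseChange_tmul,
      QuadraticForm.baseChange_tmul, QuadraticMap.comp_apply]
  have hw0 : w = 0 := by
    refine aux_finite F' F'' W (Q.comp W.subtype) hQW w ?_
    rw [hcomp, QuadraticMap.comp_apply, hfw, hv]
  rw [← hfw, hw0, map_zero]
end

section
/- Let K be a field. If K is nonreal of characteristic different from 2, then p(K(X)) = s(K) + 1, where K(X) is the rational function field. -/
lemma isSumSqN_succ_of {R : Type*} [CommRing R] {m : ℕ} {a : R} (h : IsSumSqN m a) :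
    IsSumSqN (m + 1) a := by
  obtain ⟨x, hx⟩ := h
  exact ⟨Fin.cons 0 x, by simp [Fin.sum_univ_succ, hx]⟩

lemma isSumSqN_mono {R : Type*} [CommRing R] {m n : ℕ} {a : R} (h : IsSumSqN m a)
    (hmn : m ≤ n) : IsSumSqN n a := by
  induction n, hmn using Nat.le_induction with
  | base => exact h
  | succ n hmn ih => exact isSumSqN_succ_of ih

lemma isSumSqN_map {R S : Type*} [CommRing R] [CommRing S] (f : R →+* S) {m : ℕ} {a : R}
    (h : IsSumSqN m a) : IsSumSqN m (f a) := by
  obtain ⟨x, hx⟩ := h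
  exact ⟨fun i => f (x i), by rw [hx, map_sum]; simp [map_pow]⟩

/-- In a field of characteristic ≠ 2 where `-1` is a sum of `s` squares, every element is a
sum of `s + 1` squares. -/
lemma all_isSumSqN {F : Type*} [Field F] (h2 : (2 : F) ≠ 0) {s : ℕ}
    (hs : IsSumSqN s (-1 : F)) (a : F) : IsSumSqN (s + 1) a := by
  obtain ⟨e, he⟩ := hs
  refine ⟨Fin.cons ((a + 1) / 2) (fun i => e i * ((a - 1) / 2)), ?_⟩
  rw [Fin.sum_univ_succ]
  simp only [Fin.cons_zero, Fin.cons_succ]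
  have h1 : ∑ i, (e i * ((a - 1) / 2)) ^ 2 = (∑ i, e i ^ 2) * ((a - 1) / 2) ^ 2 := by
    rw [Finset.sum_mul]
    exact Finset.sum_congr rfl fun i _ => by ring
  rw [h1, ← he]
  field_simp
  ring

open Polynomial in
/-- If `X` is a sum of `n + 1` squares in `K(X)`, then `-1` is a sum of `n` squares in `K`. -/
lemma isSumSqN_neg_one_of_X {K : Type*} [Field K] {n : ℕ}
    (h : IsSumSqN (n + 1) (RatFunc.X : RatFunc K)) : IsSumSqN n (-1 : K) := by
  classical
  obtain ⟨f, hf⟩ := h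
  obtain ⟨b, hb⟩ := IsLocalization.exist_integer_multiples_of_finite
    (nonZeroDivisors (Polynomial K)) f
  choose p hp using hb
  have hbne : (b : Polynomial K) ≠ 0 := nonZeroDivisors.coe_ne_zero b
  have hinj := IsFractionRing.injective (Polynomial K) (RatFunc K)
  have hpoly : Polynomial.X * (b : Polynomial K) ^ 2 = ∑ i, p i ^ 2 := by
    apply hinj
    rw [map_mul, map_pow, map_sum, RatFunc.algebraMap_X, hf, Finset.sum_mul]
    refine Finset.sum_congr rfl fun i _ => ?_
    rw [map_pow, hp i, Algebra.smul_def, mul_pow]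
    ring
  set d := Finset.univ.sup (fun i : Fin (n + 1) => (p i).natDegree) with hd
  have hdle : ∀ i, (p i).natDegree ≤ d := fun i => Finset.le_sup (f := fun i : Fin (n + 1) => (p i).natDegree) (Finset.mem_univ i)
  have hN : (Polynomial.X * (b : Polynomial K) ^ 2).natDegree
      = 1 + 2 * (b : Polynomial K).natDegree := by
    rw [natDegree_mul X_ne_zero (pow_ne_zero _ hbne), natDegree_X, natDegree_pow]
  have hNle : 1 + 2 * (b : Polynomial K).natDegree ≤ 2 * d := by
    rw [← hN, hpoly]
    refine natDegree_sum_le_of_forall_le _ _ fun i _ => ?_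
    rw [natDegree_pow]
    exact Nat.mul_le_mul_left 2 (hdle i)
  have hcoeff0 : (Polynomial.X * (b : Polynomial K) ^ 2).coeff (2 * d) = 0 :=
    coeff_eq_zero_of_natDegree_lt (by rw [hN]; omega)
  have hcoe : ∀ i, (p i ^ 2).coeff (2 * d) = ((p i).coeff d) ^ 2 := by
    intro i
    rcases lt_or_eq_of_le (hdle i) with hlt' | heq
    · rw [coeff_eq_zero_of_natDegree_lt (by rw [natDegree_pow]; omega),
        coeff_eq_zero_of_natDegree_lt hlt']
      ring
    · rw [← heq, coeff_pow_mul_natDegree]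
      rfl
  have hsum0 : ∑ i, ((p i).coeff d) ^ 2 = 0 := by
    have h0 := congrArg (fun q => Polynomial.coeff q (2 * d)) hpoly
    simp only [finset_sum_coeff, hcoeff0, hcoe] at h0
    exact h0.symm
  obtain ⟨i₀, -, hdi₀⟩ := Finset.exists_mem_eq_sup Finset.univ Finset.univ_nonempty
    (fun i : Fin (n + 1) => (p i).natDegree)
  have hd1 : 1 ≤ d := by omega
  have hpne : p i₀ ≠ 0 := by
    intro h0
    rw [h0, natDegree_zero] at hdi₀
    omega
  have hci₀ : (p i₀).coeff d ≠ 0 := by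
    rw [hd, hdi₀]
    exact mt leadingCoeff_eq_zero.mp hpne
  refine ⟨fun j => (p (i₀.succAbove j)).coeff d / (p i₀).coeff d, ?_⟩
  have hsplit := Fin.sum_univ_succAbove (fun i => ((p i).coeff d) ^ 2) i₀
  rw [hsplit] at hsum0
  have h1 : ∑ j, ((p (i₀.succAbove j)).coeff d) ^ 2 = -((p i₀).coeff d) ^ 2 :=
    eq_neg_of_add_eq_zero_right hsum0
  simp only [div_pow]
  rw [← Finset.sum_div, h1, neg_div, div_self (pow_ne_zero 2 hci₀)]

/-- If `K` is nonreal of characteristic not 2, then `p(K(X)) = s(K) + 1`. -/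
theorem pyth_ratFunc_of_nonreal (K : Type*) [Field K] (h2 : ringChar K ≠ 2)
    (hnonreal : IsSOS (-1 : K)) :
    pythNum (RatFunc K) = levelN K + 1 := by
  classical
  have hex : ∃ m, IsSumSqN m (-1 : K) := hnonreal
  set s := Nat.find hex with hs
  have hsspec : IsSumSqN s (-1 : K) := Nat.find_spec hex
  have hsmin : ∀ t, t < s → ¬ IsSumSqN t (-1 : K) := fun t ht => Nat.find_min hex ht
  have hlevel : levelN K = (s : ℕ∞) := by
    apply le_antisymm
    · exact sInf_le ⟨s, rfl, hsspec⟩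
    · refine le_sInf ?_
      rintro n ⟨m, rfl, hm⟩
      rw [hs]
      exact_mod_cast Nat.find_min' hex hm
  have h2K : (2 : K) ≠ 0 := Ring.two_ne_zero h2
  have h2F : (2 : RatFunc K) ≠ 0 := by
    have hinj : Function.Injective (algebraMap K (RatFunc K)) :=
      (algebraMap K (RatFunc K)).injective
    intro h0
    apply h2K
    apply hinj
    rw [map_ofNat, map_zero]
    exact_mod_cast h0
  have hsF : IsSumSqN s (-1 : RatFunc K) := by
    have := isSumSqN_map (algebraMap K (RatFunc K)) hsspec
    simpa using this
  have hall : ∀ a : RatFunc K, IsSumSqN (s + 1) a := all_isSumSqN h2F hsF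
  have hns0 : ¬ IsSumSqN 0 (-1 : K) := by
    rintro ⟨x, hx⟩
    simp at hx
  have hs1 : 1 ≤ s := by
    rcases Nat.eq_zero_or_pos s with h0 | h1
    · exact absurd (h0 ▸ hsspec) hns0
    · exact h1
  have hlb : ∀ m : ℕ, (∀ a : RatFunc K, IsSOS a → IsSumSqN m a) → s + 1 ≤ m := by
    intro m hm
    by_contra hc
    push_neg at hc
    have hXm : IsSumSqN m (RatFunc.X : RatFunc K) :=
      hm RatFunc.X ⟨s + 1, hall RatFunc.X⟩
    have hXs : IsSumSqN ((s - 1) + 1) (RatFunc.X : RatFunc K) := by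
      have : (s - 1) + 1 = s := by omega
      rw [this]
      exact isSumSqN_mono hXm (by omega)
    exact hsmin (s - 1) (by omega) (isSumSqN_neg_one_of_X hXs)
  have hmain : pythNum (RatFunc K) = ((s + 1 : ℕ) : ℕ∞) := by
    apply le_antisymm
    · exact sInf_le ⟨s + 1, rfl, fun a _ => hall a⟩
    · refine le_sInf ?_
      rintro n ⟨m, rfl, hm⟩
      exact_mod_cast hlb m hm
  rw [hmain, hlevel]
  push_cast
  rfl
end
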